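/- Let ℓ be a prime and let χ = (χ₁, χ₂), ψ = (ψ₁, ψ₂) be pairs of unramified smooth characters of ℚ_ℓ^× with |χᵢ(ℓ)/ψᵢ(ℓ)| < ℓ for i = 1, 2. For t ≥ 0 let Φ_t := φ_t ⊗ φ_t and f_{Φ_t,χ,ψ} := the restriction to H(ℚ_ℓ) of f_{φ_t,χ₁,ψ₁} ⊗ f_{φ_t,χ₂,ψ₂}. Then: (a) f_{Φ₀,χ,ψ}(1) = 1, and for t ≥ 1, f_{Φ_t,χ,ψ}(1) = L(χ₁/ψ₁, 1)^{−1}·L(χ₂/ψ₂, 1)^{−1} = (1 − χ₁(ℓ)ψ₁(ℓ)^{−1}ℓ^{−1})(1 − χ₂(ℓ)ψ₂(ℓ)^{−1}ℓ^{−1}); (b) for t ≥ 1, f_{Φ_t,χ,ψ} vanishes at every point of H(ℚ_ℓ) not lying in B_H(ℚ_ℓ)·K_{H,0}(ℓ^t), where B_H(ℚ_ℓ) consists of pairs of upper-triangular matrices in H(ℚ_ℓ) and K_{H,0}(ℓ^t) := {(h₁,h₂) ∈ H(ℤ_ℓ) : the lower-left entries of h₁ and h₂ lie in ℓ^tℤ_ℓ}.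 -/

import Mathlib

/-!
Statement 17: values and support of the Siegel sections `f_{Φ_t,χ,ψ}` on
`H(ℚ_ℓ) = GL₂(ℚ_ℓ) ×_{det} GL₂(ℚ_ℓ)`.
-/

open scoped Classical
open MeasureTheory Matrix

noncomputable section

namespace GSp4ES

variable (l : ℕ) [Fact l.Prime]

instance : MeasurableSpace ℚ_[l] := borel _
instance : BorelSpace ℚ_[l] := ⟨rfl⟩

abbrev PChar := ℚ_[l]ˣ →* ℂˣ

def IsSmoothChar (χ : PChar l) : Prop :=
  ∃ U : Subgroup ℚ_[l]ˣ, IsOpen (U : Set ℚ_[l]ˣ) ∧ ∀ x ∈ U, χ x = 1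

def IsUnramifiedChar (χ : PChar l) : Prop :=
  ∀ x : ℚ_[l]ˣ, ‖(x : ℚ_[l])‖ = 1 → χ x = 1

def ellU : ℚ_[l]ˣ :=
  Units.mk0 (l : ℚ_[l]) (by
    have h := (Fact.out : l.Prime).pos
    exact_mod_cast Nat.cast_ne_zero.mpr h.ne')

abbrev GL2 := GL (Fin 2) ℚ_[l]

def detU2 (g : GL2 l) : ℚ_[l]ˣ := Matrix.GeneralLinearGroup.det g

def LrecipOne (χ ψ : PChar l) : ℂ :=
  1 - (χ (ellU l) : ℂ) * ((ψ (ellU l) : ℂ))⁻¹ * (l : ℂ)⁻¹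

def siegelSection (μx : Measure ℚ_[l]ˣ) (φ : (Fin 2 → ℚ_[l]) → ℂ) (χ ψ : PChar l)
    (g : GL2 l) : ℂ :=
  (χ (detU2 l g) : ℂ) * ((Real.sqrt ‖((detU2 l g : ℚ_[l]ˣ) : ℚ_[l])‖ : ℝ) : ℂ) *
    LrecipOne l χ ψ *
    ∫ x : ℚ_[l]ˣ,
      φ (Matrix.vecMul ![0, (x : ℚ_[l])] (g : Matrix (Fin 2) (Fin 2) ℚ_[l])) *
        ((χ x : ℂ) * ((ψ x : ℂ))⁻¹) * (‖(x : ℚ_[l])‖ : ℂ) ∂μx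

def phi0 : (Fin 2 → ℚ_[l]) → ℂ :=
  fun v => if ‖v 0‖ ≤ 1 ∧ ‖v 1‖ ≤ 1 then 1 else 0

def phiT (t : ℕ) : (Fin 2 → ℚ_[l]) → ℂ :=
  fun v => if ‖v 0‖ ≤ (l : ℝ) ^ (-(t : ℤ)) ∧ ‖v 1‖ = 1 then 1 else 0

def inGL2Z (g : GL2 l) : Prop :=
  (∀ i j, ‖(g : Matrix (Fin 2) (Fin 2) ℚ_[l]) i j‖ ≤ 1) ∧
  (∀ i j, ‖((g⁻¹ : GL2 l) : Matrix (Fin 2) (Fin 2) ℚ_[l]) i j‖ ≤ 1)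

/-- The pair `(h₁, h₂)` lies in `B_H(ℚ_ℓ)·K_{H,0}(ℓ^t)`. -/
def inBHKH0 (t : ℕ) (h₁ h₂ : GL2 l) : Prop :=
  ∃ b₁ b₂ k₁ k₂ : GL2 l,
    -- (b₁, b₂) ∈ B_H(ℚ_ℓ): upper triangular with equal determinants
    (b₁ : Matrix (Fin 2) (Fin 2) ℚ_[l]) 1 0 = 0 ∧
    (b₂ : Matrix (Fin 2) (Fin 2) ℚ_[l]) 1 0 = 0 ∧
    detU2 l b₁ = detU2 l b₂ ∧
    -- (k₁, k₂) ∈ K_{H,0}(ℓ^t)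
    inGL2Z l k₁ ∧ inGL2Z l k₂ ∧ detU2 l k₁ = detU2 l k₂ ∧
    ‖(k₁ : Matrix (Fin 2) (Fin 2) ℚ_[l]) 1 0‖ ≤ (l : ℝ) ^ (-(t : ℤ)) ∧
    ‖(k₂ : Matrix (Fin 2) (Fin 2) ℚ_[l]) 1 0‖ ≤ (l : ℝ) ^ (-(t : ℤ)) ∧
    h₁ = b₁ * k₁ ∧ h₂ = b₂ * k₂

/-!
With the Haar measure normalised by `vol(ℤ_ℓˣ) = 1`, every valuation shell `{v(x) = n}` of `ℚ_ℓˣ`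
is a translate of `ℤ_ℓˣ` and has measure `1`. For unramified `χ, ψ` the integrand
`(χ/ψ)(x)|x|` equals `β ^ v(x)` with `β = χ(ℓ)ψ(ℓ)⁻¹ℓ⁻¹`, so at the identity the Siegel integral
is a sum over shells: for `φ₀` it is the geometric series `∑_{n ≥ 0} βⁿ = L(χ/ψ, 1)`, which
cancels the normalising factor, while for `φ_t` only the shell `v(x) = 0` contributes.

For the support, `φ_t((0, x)g) ≠ 0` forces `|x g₂₂| = 1` and `|x g₂₁| ≤ ℓ^{-t}`, that is
`|g₂₁/g₂₂| ≤ ℓ^{-t}`. Then `g = b k` with `k = [[1, 0], [g₂₁/g₂₂, 1]] ∈ K₀(ℓ^t)` of determinant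
`1` and `b` upper triangular with `det b = det g`, and two such factorisations of `h₁, h₂` with
`det h₁ = det h₂` combine to one in `B_H(ℚ_ℓ) K_{H,0}(ℓ^t)`.
-/

instance {M : Type*} [Monoid M] [MeasurableSpace M] [MeasurableMul M] : MeasurableMul Mˣ where
  measurable_const_mul c :=
    measurable_comap_iff.2 ((measurable_const_mul (c : M)).comp (comap_measurable Units.val))
  measurable_mul_const c :=
    measurable_comap_iff.2 ((measurable_mul_const (c : M)).comp (comap_measurable Units.val))

lemma norm_ellU : ‖((ellU l : ℚ_[l]ˣ) : ℚ_[l])‖ = (l : ℝ)⁻¹ := Padic.norm_p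

lemma valuation_ellU : ((ellU l : ℚ_[l]ˣ) : ℚ_[l]).valuation = 1 := Padic.valuation_p

lemma norm_eq_zpow_neg_iff_valuation_eq {x : ℚ_[l]} (hx : x ≠ 0) (n : ℤ) :
    ‖x‖ = (l : ℝ) ^ (-n) ↔ x.valuation = n := by
  rw [Padic.norm_eq_zpow_neg_valuation hx,
    (zpow_right_injective₀ (by exact_mod_cast (Fact.out : l.Prime).pos)
      (by exact_mod_cast (Fact.out : l.Prime).one_lt.ne')).eq_iff, neg_inj]

section ValuationShells

variable (μ : Measure ℚ_[l]ˣ) [μ.IsMulLeftInvariant]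
  (hμ : μ {x : ℚ_[l]ˣ | ‖(x : ℚ_[l])‖ = 1} = 1)

lemma measurableSet_valuation_eq (n : ℤ) :
    MeasurableSet {x : ℚ_[l]ˣ | (x : ℚ_[l]).valuation = n} := by
  have hnorm : {x : ℚ_[l]ˣ | (x : ℚ_[l]).valuation = n} =
      (fun x : ℚ_[l]ˣ => ‖(x : ℚ_[l])‖) ⁻¹' {(l : ℝ) ^ (-n)} := by
    ext x
    exact (norm_eq_zpow_neg_iff_valuation_eq l x.ne_zero n).symm
  rw [hnorm]
  exact (measurable_norm.comp (comap_measurable Units.val)) (measurableSet_singleton _)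

include hμ in
lemma measure_valuation_eq (n : ℤ) : μ {x : ℚ_[l]ˣ | (x : ℚ_[l]).valuation = n} = 1 := by
  have hshift : {x : ℚ_[l]ˣ | (x : ℚ_[l]).valuation = n} =
      (fun x => ellU l ^ (-n) * x) ⁻¹' {x | ‖(x : ℚ_[l])‖ = 1} := by
    ext x
    have hℓ : ((ellU l : ℚ_[l]) ^ (-n)) ≠ 0 := zpow_ne_zero _ (ellU l).ne_zero
    simp only [Set.mem_preimage, Set.mem_ofPred_eq, Units.val_mul, Units.val_zpow_eq_zpow_val]
    rw [← zpow_zero (l : ℝ), ← neg_zero,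
      norm_eq_zpow_neg_iff_valuation_eq l (mul_ne_zero hℓ x.ne_zero),
      Padic.valuation_mul hℓ x.ne_zero, Padic.valuation_zpow, valuation_ellU]
    omega
  rw [hshift, measure_preimage_mul, hμ]

include hμ in
lemma integral_indicator_valuation_eq {E : Type*} [NormedAddCommGroup E] [NormedSpace ℝ E]
    [CompleteSpace E] (n : ℤ) (e : E) :
    ∫ x, {x : ℚ_[l]ˣ | (x : ℚ_[l]).valuation = n}.indicator (fun _ => e) x ∂μ = e := by
  rw [integral_indicator_const _ (measurableSet_valuation_eq l n), measureReal_def,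
    measure_valuation_eq l μ hμ n, ENNReal.toReal_one, one_smul]

include hμ in
lemma integral_comp_valuation {g : ℤ → ℂ} (hg : Summable fun n => ‖g n‖) :
    ∫ x, g (x : ℚ_[l]).valuation ∂μ = ∑' n, g n := by
  have hsum : ∀ x : ℚ_[l]ˣ, ∑' n, {x : ℚ_[l]ˣ | (x : ℚ_[l]).valuation = n}.indicator
      (fun _ => g n) x = g (x : ℚ_[l]).valuation := fun x => by
    rw [tsum_eq_single (x : ℚ_[l]).valuation]
    · exact Set.indicator_of_mem rfl _
    · exact fun n hn => Set.indicator_of_notMem (Ne.symm hn) _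
  rw [← integral_congr_ae (ae_of_all _ hsum), ← integral_tsum_of_summable_integral_norm]
  · exact tsum_congr fun n => integral_indicator_valuation_eq l μ hμ n (g n)
  · refine fun n => (integrableOn_const ?_).integrable_indicator (measurableSet_valuation_eq l n)
    simp [measure_valuation_eq l μ hμ n]
  · simpa only [norm_indicator_eq_indicator_norm, integral_indicator_valuation_eq l μ hμ] using hg

end ValuationShells

lemma hasSum_ite_nonneg_zpow {K : Type*} [NormedDivisionRing K] [CompleteSpace K] {β : K}
    (hβ : ‖β‖ < 1) : HasSum (fun n : ℤ => if 0 ≤ n then β ^ n else 0) (1 - β)⁻¹ := by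
  have h := HasSum.of_nat_of_neg_add_one (f := fun n : ℤ => if 0 ≤ n then β ^ n else 0) (m' := 0)
    (by simpa using hasSum_geometric_of_norm_lt_one hβ)
    (by convert hasSum_zero with n; simp only [if_neg (by omega : ¬ (0 : ℤ) ≤ -(n + 1))])
  rwa [add_zero] at h

/-- `L(χ/ψ, 1) = (1 - eulerParam l χ ψ)⁻¹`. -/
def eulerParam (χ ψ : PChar l) : ℂ := (χ (ellU l) : ℂ) * ((ψ (ellU l) : ℂ))⁻¹ * (l : ℂ)⁻¹

lemma LrecipOne_eq_one_sub_eulerParam (χ ψ : PChar l) :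
    LrecipOne l χ ψ = 1 - eulerParam l χ ψ := rfl

lemma norm_eulerParam_lt_one {χ ψ : PChar l}
    (hlt : ‖(χ (ellU l) : ℂ) / (ψ (ellU l) : ℂ)‖ < l) : ‖eulerParam l χ ψ‖ < 1 := by
  rw [norm_div] at hlt
  rwa [eulerParam, norm_mul, norm_mul, norm_inv, norm_inv, Complex.norm_natCast, ← div_eq_mul_inv,
    ← div_eq_mul_inv, div_lt_one (by exact_mod_cast (Fact.out : l.Prime).pos)]

lemma IsUnramifiedChar.apply_eq_zpow_valuation {χ : PChar l} (hχ : IsUnramifiedChar l χ)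
    (x : ℚ_[l]ˣ) : χ x = χ (ellU l) ^ (x : ℚ_[l]).valuation := by
  have hl : (l : ℝ) ≠ 0 := by exact_mod_cast (Fact.out : l.Prime).ne_zero
  have hunit : ‖((x * ellU l ^ (-(x : ℚ_[l]).valuation) : ℚ_[l]ˣ) : ℚ_[l])‖ = 1 := by
    rw [Units.val_mul, Units.val_zpow_eq_zpow_val, norm_mul, norm_zpow, norm_ellU,
      Padic.norm_eq_zpow_neg_valuation x.ne_zero, _root_.inv_zpow', neg_neg, ← zpow_add₀ hl,
      neg_add_cancel, zpow_zero]
  rw [← mul_inv_eq_one, ← map_zpow, ← map_inv, ← _root_.zpow_neg, ← map_mul]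
  exact hχ _ hunit

lemma charRatio_mul_norm_eq_zpow {χ ψ : PChar l} (hχ : IsUnramifiedChar l χ)
    (hψ : IsUnramifiedChar l ψ) (x : ℚ_[l]ˣ) :
    (χ x : ℂ) * ((ψ x : ℂ))⁻¹ * (‖(x : ℚ_[l])‖ : ℂ) =
      eulerParam l χ ψ ^ (x : ℚ_[l]).valuation := by
  rw [hχ.apply_eq_zpow_valuation, hψ.apply_eq_zpow_valuation,
    Padic.norm_eq_zpow_neg_valuation x.ne_zero, eulerParam, mul_zpow, mul_zpow,
    Units.val_zpow_eq_zpow_val, Units.val_zpow_eq_zpow_val, _root_.inv_zpow, _root_.inv_zpow]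
  push_cast
  rw [_root_.zpow_neg]

lemma siegelSection_one (μ : Measure ℚ_[l]ˣ) (φ : (Fin 2 → ℚ_[l]) → ℂ) {χ ψ : PChar l}
    (hχ : IsUnramifiedChar l χ) (hψ : IsUnramifiedChar l ψ) :
    siegelSection l μ φ χ ψ 1 = LrecipOne l χ ψ *
      ∫ x, φ ![0, (x : ℚ_[l])] * eulerParam l χ ψ ^ (x : ℚ_[l]).valuation ∂μ := by
  have hdet : detU2 l 1 = 1 := map_one _
  simp only [siegelSection, hdet, Units.val_one, Matrix.vecMul_one, mul_assoc,
    ← charRatio_mul_norm_eq_zpow l hχ hψ]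
  simp

section AtIdentity

variable (μ : Measure ℚ_[l]ˣ) [μ.IsMulLeftInvariant]
  (hμ : μ {x : ℚ_[l]ˣ | ‖(x : ℚ_[l])‖ = 1} = 1) {χ ψ : PChar l}
  (hχ : IsUnramifiedChar l χ) (hψ : IsUnramifiedChar l ψ)

include hμ hχ hψ

lemma siegelSection_phi0_one (hlt : ‖(χ (ellU l) : ℂ) / (ψ (ellU l) : ℂ)‖ < l) :
    siegelSection l μ (phi0 l) χ ψ 1 = 1 := by
  have hβ := norm_eulerParam_lt_one l hlt
  have hintegrand : ∀ x : ℚ_[l]ˣ,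
      phi0 l ![0, (x : ℚ_[l])] * eulerParam l χ ψ ^ (x : ℚ_[l]).valuation =
        if 0 ≤ (x : ℚ_[l]).valuation then eulerParam l χ ψ ^ (x : ℚ_[l]).valuation else 0 :=
    fun x => by simp [phi0, Padic.norm_le_one_iff_val_nonneg]
  have hnorm : Summable fun n : ℤ => ‖if 0 ≤ n then eulerParam l χ ψ ^ n else 0‖ := by
    simpa only [apply_ite, norm_zpow, norm_zero] using
      (hasSum_ite_nonneg_zpow (K := ℝ) (by rwa [norm_norm])).summable
  rw [siegelSection_one l μ _ hχ hψ, integral_congr_ae (ae_of_all _ hintegrand),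
    integral_comp_valuation l μ hμ hnorm, (hasSum_ite_nonneg_zpow hβ).tsum_eq,
    LrecipOne_eq_one_sub_eulerParam]
  exact mul_inv_cancel₀ (sub_ne_zero.2 fun h => by simp [← h] at hβ)

lemma siegelSection_phiT_one (t : ℕ) : siegelSection l μ (phiT l t) χ ψ 1 = LrecipOne l χ ψ := by
  have hintegrand : ∀ x : ℚ_[l]ˣ,
      phiT l t ![0, (x : ℚ_[l])] * eulerParam l χ ψ ^ (x : ℚ_[l]).valuation =
        if (x : ℚ_[l]).valuation = 0 then 1 else 0 := fun x => by
    have hunit := norm_eq_zpow_neg_iff_valuation_eq l x.ne_zero 0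
    rw [neg_zero, zpow_zero] at hunit
    split_ifs with hv <;> simp [phiT, hunit, hv]
  have hnorm : Summable fun n : ℤ => ‖if n = 0 then (1 : ℂ) else 0‖ := by
    simpa only [apply_ite, norm_one, norm_zero] using (hasSum_ite_eq (0 : ℤ) (1 : ℝ)).summable
  rw [siegelSection_one l μ _ hχ hψ, integral_congr_ae (ae_of_all _ hintegrand),
    integral_comp_valuation l μ hμ hnorm, tsum_ite_eq, mul_one]

end AtIdentity

lemma lowerRow_of_siegelSection_phiT_ne_zero (μ : Measure ℚ_[l]ˣ) (t : ℕ) (χ ψ : PChar l)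
    (g : GL2 l) (h : siegelSection l μ (phiT l t) χ ψ g ≠ 0) :
    (g : Matrix (Fin 2) (Fin 2) ℚ_[l]) 1 1 ≠ 0 ∧
      ‖(g : Matrix (Fin 2) (Fin 2) ℚ_[l]) 1 0 / (g : Matrix (Fin 2) (Fin 2) ℚ_[l]) 1 1‖ ≤
        (l : ℝ) ^ (-(t : ℤ)) := by
  contrapose! h
  have hφ : ∀ x : ℚ_[l]ˣ, phiT l t (Matrix.vecMul ![0, (x : ℚ_[l])] g) = 0 := fun x => by
    rw [phiT, if_neg]
    rintro ⟨h0, h1⟩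
    simp only [Matrix.vecMul, dotProduct, Fin.sum_univ_two, Matrix.cons_val_zero,
      Matrix.cons_val_one, zero_mul, zero_add] at h0 h1
    have h11 : (g : Matrix (Fin 2) (Fin 2) ℚ_[l]) 1 1 ≠ 0 := fun h => by simp [h] at h1
    refine (h h11).not_ge ?_
    rwa [← mul_div_mul_left _ _ x.ne_zero, norm_div, h1, div_one]
  simp [siegelSection, hφ]

section LowerUnipotent

variable {R : Type*} [CommRing R]

def lowerUnipotent (c : R) : GL (Fin 2) R :=
  ⟨!![1, 0; c, 1], !![1, 0; -c, 1], by simp [Matrix.one_fin_two], by simp [Matrix.one_fin_two]⟩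

lemma coe_lowerUnipotent (c : R) :
    ((lowerUnipotent c : GL (Fin 2) R) : Matrix (Fin 2) (Fin 2) R) = !![1, 0; c, 1] := rfl

lemma coe_lowerUnipotent_inv (c : R) :
    (((lowerUnipotent c)⁻¹ : GL (Fin 2) R) : Matrix (Fin 2) (Fin 2) R) = !![1, 0; -c, 1] := rfl

lemma det_lowerUnipotent (c : R) : Matrix.GeneralLinearGroup.det (lowerUnipotent c) = 1 :=
  Units.ext (by simp [coe_lowerUnipotent, Matrix.det_fin_two_of])

lemma mul_lowerUnipotent_inv_apply_one_zero (g : GL (Fin 2) R) (c : R) :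
    ((g * (lowerUnipotent c)⁻¹ : GL (Fin 2) R) : Matrix (Fin 2) (Fin 2) R) 1 0 =
      (g : Matrix (Fin 2) (Fin 2) R) 1 0 - c * (g : Matrix (Fin 2) (Fin 2) R) 1 1 := by
  rw [Units.val_mul, coe_lowerUnipotent_inv]
  simp [Matrix.mul_apply, Fin.sum_univ_two]
  ring

end LowerUnipotent

lemma inGL2Z_lowerUnipotent {c : ℚ_[l]} (hc : ‖c‖ ≤ 1) : inGL2Z l (lowerUnipotent c) := by
  refine ⟨fun i j => ?_, fun i j => ?_⟩
  · rw [coe_lowerUnipotent]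
    fin_cases i <;> fin_cases j <;> simp [hc]
  · rw [coe_lowerUnipotent_inv]
    fin_cases i <;> fin_cases j <;> simp [hc]

lemma exists_eq_upperTriangular_mul_congruence {t : ℕ} {g : GL2 l}
    (h₁₁ : (g : Matrix (Fin 2) (Fin 2) ℚ_[l]) 1 1 ≠ 0)
    (hc : ‖(g : Matrix (Fin 2) (Fin 2) ℚ_[l]) 1 0 / (g : Matrix (Fin 2) (Fin 2) ℚ_[l]) 1 1‖ ≤
      (l : ℝ) ^ (-(t : ℤ))) :
    ∃ b k : GL2 l, (b : Matrix (Fin 2) (Fin 2) ℚ_[l]) 1 0 = 0 ∧ inGL2Z l k ∧ detU2 l k = 1 ∧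
      ‖(k : Matrix (Fin 2) (Fin 2) ℚ_[l]) 1 0‖ ≤ (l : ℝ) ^ (-(t : ℤ)) ∧ g = b * k := by
  have hc₁ := hc.trans (zpow_le_one_of_nonpos₀ (by exact_mod_cast (Fact.out : l.Prime).one_le)
    (by omega))
  refine ⟨_, _, ?_, inGL2Z_lowerUnipotent l hc₁, det_lowerUnipotent _,
    by rwa [coe_lowerUnipotent], (inv_mul_cancel_right g _).symm⟩
  rw [mul_lowerUnipotent_inv_apply_one_zero, div_mul_cancel₀ _ h₁₁, sub_self]

lemma inBHKH0_of_lowerRow {t : ℕ} {h₁ h₂ : GL2 l} (hdet : detU2 l h₁ = detU2 l h₂)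
    (h₁₁ : (h₁ : Matrix (Fin 2) (Fin 2) ℚ_[l]) 1 1 ≠ 0)
    (hc₁ : ‖(h₁ : Matrix (Fin 2) (Fin 2) ℚ_[l]) 1 0 / (h₁ : Matrix (Fin 2) (Fin 2) ℚ_[l]) 1 1‖ ≤
      (l : ℝ) ^ (-(t : ℤ)))
    (h₂₁ : (h₂ : Matrix (Fin 2) (Fin 2) ℚ_[l]) 1 1 ≠ 0)
    (hc₂ : ‖(h₂ : Matrix (Fin 2) (Fin 2) ℚ_[l]) 1 0 / (h₂ : Matrix (Fin 2) (Fin 2) ℚ_[l]) 1 1‖ ≤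
      (l : ℝ) ^ (-(t : ℤ))) :
    inBHKH0 l t h₁ h₂ := by
  obtain ⟨b₁, k₁, hb₁, hk₁, hdk₁, hck₁, rfl⟩ := exists_eq_upperTriangular_mul_congruence l h₁₁ hc₁
  obtain ⟨b₂, k₂, hb₂, hk₂, hdk₂, hck₂, rfl⟩ := exists_eq_upperTriangular_mul_congruence l h₂₁ hc₂
  have hdetb : detU2 l b₁ = detU2 l b₂ := by
    unfold detU2 at hdet hdk₁ hdk₂ ⊢
    simpa [hdk₁, hdk₂] using hdet
  exact ⟨b₁, b₂, k₁, k₂, hb₁, hb₂, hdetb, hk₁, hk₂, hdk₁.trans hdk₂.symm, hck₁, hck₂, rfl, rfl⟩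

theorem statement17
    (μx : Measure ℚ_[l]ˣ) [μx.IsHaarMeasure]
    (hμx : μx {x : ℚ_[l]ˣ | ‖(x : ℚ_[l])‖ = 1} = 1)
    (χ₁ χ₂ ψ₁ ψ₂ : PChar l)
    (hχ₁ : IsUnramifiedChar l χ₁) (hχ₂ : IsUnramifiedChar l χ₂)
    (hψ₁ : IsUnramifiedChar l ψ₁) (hψ₂ : IsUnramifiedChar l ψ₂)
    (hlt₁ : ‖(χ₁ (ellU l) : ℂ) / (ψ₁ (ellU l) : ℂ)‖ < l)
    (hlt₂ : ‖(χ₂ (ellU l) : ℂ) / (ψ₂ (ellU l) : ℂ)‖ < l) :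
    -- (a), t = 0
    (siegelSection l μx (phi0 l) χ₁ ψ₁ 1 * siegelSection l μx (phi0 l) χ₂ ψ₂ 1 = 1) ∧
    -- (a), t ≥ 1
    (∀ t : ℕ, 1 ≤ t →
      siegelSection l μx (phiT l t) χ₁ ψ₁ 1 * siegelSection l μx (phiT l t) χ₂ ψ₂ 1 =
        (1 - (χ₁ (ellU l) : ℂ) * ((ψ₁ (ellU l) : ℂ))⁻¹ * (l : ℂ)⁻¹) *
        (1 - (χ₂ (ellU l) : ℂ) * ((ψ₂ (ellU l) : ℂ))⁻¹ * (l : ℂ)⁻¹)) ∧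
    -- (b)
    (∀ t : ℕ, 1 ≤ t → ∀ h₁ h₂ : GL2 l, detU2 l h₁ = detU2 l h₂ →
      ¬ inBHKH0 l t h₁ h₂ →
      siegelSection l μx (phiT l t) χ₁ ψ₁ h₁ * siegelSection l μx (phiT l t) χ₂ ψ₂ h₂ = 0) := by
  refine ⟨?_, fun t _ => ?_, fun t _ h₁ h₂ hdet => ?_⟩
  · rw [siegelSection_phi0_one l μx hμx hχ₁ hψ₁ hlt₁, siegelSection_phi0_one l μx hμx hχ₂ hψ₂ hlt₂,
      one_mul]
  · rw [siegelSection_phiT_one l μx hμx hχ₁ hψ₁, siegelSection_phiT_one l μx hμx hχ₂ hψ₂]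
    rfl
  · contrapose!
    intro hne
    obtain ⟨h₁₁, hc₁⟩ :=
      lowerRow_of_siegelSection_phiT_ne_zero l μx t χ₁ ψ₁ h₁ (left_ne_zero_of_mul hne)
    obtain ⟨h₂₁, hc₂⟩ :=
      lowerRow_of_siegelSection_phiT_ne_zero l μx t χ₂ ψ₂ h₂ (right_ne_zero_of_mul hne)
    exact inBHKH0_of_lowerRow l hdet h₁₁ hc₁ h₂₁ hc₂

end GSp4ES
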